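/- Let G₁ be r₁-regular on n₁ ≥ 2 vertices and G₂ be r₂-regular on n₂ ≥ 2 vertices. For each signless Laplacian eigenvalue νⱼ(G₁) of G₁, the two roots of x² − ((n₂+1)r₁ + 2r₂ + νⱼ(G₁))x + (2n₂r₁r₂ + (2n₂r₁ + 2r₂ + r₁)νⱼ(G₁) − n₂νⱼ(G₁)²) = 0 are signless Laplacian eigenvalues of G₁ ⋆ G₂. -/

import Mathlib

/-!
If `z` is a signless Laplacian eigenvector of the `r₁`-regular graph `G₁` with eigenvalue `ν`, then
`A(G₁) z = (ν - r₁) z`. In `G₁ ⋆ G₂` every vertex `(i, u)` sees the `G₁`-neighbours of `i` and `r₂`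
vertices `(i, w)`, while `i` sees its `G₁`-neighbours `n₂ + 1` times over, so `Q(G₁ ⋆ G₂)` maps
`(a z, b (z ⊗ 𝟙))` to `(a' z, b' (z ⊗ 𝟙))` with `(a', b') = M (a, b)` for the 2×2 matrix
`M = [[n₂ r₁ + ν, n₂ (ν - r₁)], [ν - r₁, r₁ + 2 r₂]]`, whose characteristic polynomial is the given
quadratic. An eigenvector `(a, b)` of `M` therefore lifts to an eigenvector of `Q(G₁ ⋆ G₂)`.
-/

open Matrix Polynomial BigOperators

/-- The neighbourhood corona `G₁ ⋆ G₂` of two simple graphs. -/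
def ncorona {V₁ V₂ : Type*} (G₁ : SimpleGraph V₁) (G₂ : SimpleGraph V₂) :
    SimpleGraph (V₁ ⊕ V₁ × V₂) where
  Adj := fun a b =>
    match a, b with
    | Sum.inl v, Sum.inl w => G₁.Adj v w
    | Sum.inl v, Sum.inr iu => G₁.Adj v iu.1
    | Sum.inr iu, Sum.inl w => G₁.Adj w iu.1
    | Sum.inr iu, Sum.inr jw => iu.1 = jw.1 ∧ G₂.Adj iu.2 jw.2
  symm := by
    constructor
    rintro (v | ⟨i, u⟩) (w | ⟨j, z⟩) h
    · exact G₁.adj_symm h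
    · exact h
    · exact h
    · exact ⟨h.1.symm, G₂.adj_symm h.2⟩
  loopless := by
    constructor
    rintro (v | ⟨i, u⟩) h
    · exact G₁.loopless.irrefl v h
    · exact G₂.loopless.irrefl u h.2

noncomputable instance {V₁ V₂ : Type*} (G₁ : SimpleGraph V₁) (G₂ : SimpleGraph V₂) :
    DecidableRel (ncorona G₁ G₂).Adj := Classical.decRel _

/-- The `M`-coronal `Γ_M(x) = 1ᵀ (xI - M)⁻¹ 1`, the sum of the entries of `(xI - M)⁻¹`. -/
noncomputable def coronal {n : Type*} [Fintype n] [DecidableEq n]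
    (M : Matrix n n ℝ) (x : ℝ) : ℝ :=
  ∑ i, ∑ j, (x • (1 : Matrix n n ℝ) - M)⁻¹ i j

/-- The signless Laplacian `Q(G) = D(G) + A(G)` of a simple graph. -/
def signlessLap {V : Type*} [Fintype V] [DecidableEq V]
    (G : SimpleGraph V) [DecidableRel G.Adj] : Matrix V V ℝ :=
  G.degMatrix ℝ + G.adjMatrix ℝ

open SimpleGraph

theorem Matrix.isRoot_charpoly_iff_exists_mulVec_eq_smul {K n : Type*} [Field K] [Fintype n]
    [DecidableEq n] (M : Matrix n n K) (x : K) :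
    M.charpoly.IsRoot x ↔ ∃ v ≠ 0, M *ᵥ v = x • v := by
  rw [IsRoot, eval_charpoly, ← exists_mulVec_eq_zero_iff]
  simp only [sub_mulVec, sub_eq_zero, scalar_apply]
  simp [eq_comm]

theorem signlessLap_mulVec_apply {V : Type*} [Fintype V] [DecidableEq V] (G : SimpleGraph V)
    [DecidableRel G.Adj] (w : V → ℝ) (v : V) :
    (signlessLap G *ᵥ w) v = G.degree v * w v + (G.adjMatrix ℝ *ᵥ w) v := by
  rw [signlessLap, add_mulVec, Pi.add_apply, degMatrix_mulVec_apply]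

theorem SimpleGraph.IsRegularOfDegree.adjMatrix_mulVec_eq_of_signlessLap {V : Type*} [Fintype V]
    [DecidableEq V] {G : SimpleGraph V} [DecidableRel G.Adj] {r : ℕ} (hG : G.IsRegularOfDegree r)
    {z : V → ℝ} {ν : ℝ} (hz : signlessLap G *ᵥ z = ν • z) :
    G.adjMatrix ℝ *ᵥ z = (ν - r) • z := by
  funext v
  have := congrFun hz v
  rw [signlessLap_mulVec_apply, hG v] at this
  simp only [Pi.smul_apply, smul_eq_mul] at *
  linarith

@[simp] theorem ncorona_adj_inl_inl {V₁ V₂ : Type*} {G₁ : SimpleGraph V₁} {G₂ : SimpleGraph V₂}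
    {v w : V₁} : (ncorona G₁ G₂).Adj (.inl v) (.inl w) ↔ G₁.Adj v w := Iff.rfl

@[simp] theorem ncorona_adj_inl_inr {V₁ V₂ : Type*} {G₁ : SimpleGraph V₁} {G₂ : SimpleGraph V₂}
    {v : V₁} {p : V₁ × V₂} : (ncorona G₁ G₂).Adj (.inl v) (.inr p) ↔ G₁.Adj v p.1 := Iff.rfl

@[simp] theorem ncorona_adj_inr_inl {V₁ V₂ : Type*} {G₁ : SimpleGraph V₁} {G₂ : SimpleGraph V₂}
    {p : V₁ × V₂} {w : V₁} : (ncorona G₁ G₂).Adj (.inr p) (.inl w) ↔ G₁.Adj p.1 w :=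
  G₁.adj_comm w p.1

@[simp] theorem ncorona_adj_inr_inr {V₁ V₂ : Type*} {G₁ : SimpleGraph V₁} {G₂ : SimpleGraph V₂}
    {p q : V₁ × V₂} : (ncorona G₁ G₂).Adj (.inr p) (.inr q) ↔ p.1 = q.1 ∧ G₂.Adj p.2 q.2 :=
  Iff.rfl

section ncorona

variable {V₁ V₂ : Type*} [Fintype V₁] [Fintype V₂]
  (G₁ : SimpleGraph V₁) (G₂ : SimpleGraph V₂) [DecidableRel G₁.Adj]

theorem ncorona_adjMatrix_mulVec_inl (f : V₁ → ℝ) (g : V₁ × V₂ → ℝ) (v : V₁) :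
    ((ncorona G₁ G₂).adjMatrix ℝ *ᵥ Sum.elim f g) (Sum.inl v) =
      (G₁.adjMatrix ℝ *ᵥ fun i => f i + ∑ u, g (i, u)) v := by
  simp only [mulVec, dotProduct, adjMatrix_apply, ite_mul, one_mul, zero_mul, Fintype.sum_sum_type,
    ncorona_adj_inl_inl, Sum.elim_inl, ncorona_adj_inl_inr, Sum.elim_inr, Fintype.sum_prod_type,
    mul_add, Finset.sum_add_distrib, add_right_inj]
  refine Finset.sum_congr rfl fun i _ => ?_
  split_ifs <;> simp

theorem ncorona_degree_inl (v : V₁) :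
    (ncorona G₁ G₂).degree (Sum.inl v) = (Fintype.card V₂ + 1) * G₁.degree v := by
  have h := ncorona_adjMatrix_mulVec_inl G₁ G₂ (Function.const _ (1 : ℝ)) (Function.const _ 1) v
  have hsum : (fun i => Function.const V₁ (1 : ℝ) i + ∑ u : V₂, Function.const _ 1 (i, u)) =
      Function.const V₁ (1 + Fintype.card V₂ : ℝ) := by
    ext; simp
  rw [Sum.elim_const_const, hsum, adjMatrix_mulVec_const_apply, adjMatrix_mulVec_const_apply] at h
  have : ((ncorona G₁ G₂).degree (Sum.inl v) : ℝ) = ((Fintype.card V₂ + 1) * G₁.degree v : ℕ) := by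
    push_cast
    linarith
  exact_mod_cast this

variable [DecidableEq V₁] [DecidableRel G₂.Adj]

theorem ncorona_adjMatrix_mulVec_inr (f : V₁ → ℝ) (g : V₁ × V₂ → ℝ) (i : V₁) (u : V₂) :
    ((ncorona G₁ G₂).adjMatrix ℝ *ᵥ Sum.elim f g) (Sum.inr (i, u)) =
      (G₁.adjMatrix ℝ *ᵥ f) i + (G₂.adjMatrix ℝ *ᵥ fun w => g (i, w)) u := by
  simp only [mulVec, dotProduct, adjMatrix_apply, ite_mul, one_mul, zero_mul, Fintype.sum_sum_type,
    ncorona_adj_inr_inl, Sum.elim_inl, ncorona_adj_inr_inr, Sum.elim_inr, Fintype.sum_prod_type,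
    add_right_inj, ite_and]
  rw [Finset.sum_eq_single i (fun x _ hx => by simp [Ne.symm hx]) (by simp)]
  simp

theorem ncorona_degree_inr (i : V₁) (u : V₂) :
    (ncorona G₁ G₂).degree (Sum.inr (i, u)) = G₁.degree i + G₂.degree u := by
  have h := ncorona_adjMatrix_mulVec_inr G₁ G₂ (Function.const _ (1 : ℝ)) (Function.const _ 1) i u
  rw [Sum.elim_const_const, adjMatrix_mulVec_const_apply, adjMatrix_mulVec_const_apply] at h
  have hconst : (G₂.adjMatrix ℝ *ᵥ fun w => Function.const (V₁ × V₂) (1 : ℝ) (i, w)) u =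
      G₂.degree u * 1 :=
    adjMatrix_mulVec_const_apply
  simp only [hconst, mul_one] at h
  exact_mod_cast h

end ncorona

def ncoronaLift {V₁ : Type*} (V₂ : Type*) (z : V₁ → ℝ) (c : Fin 2 → ℝ) : V₁ ⊕ V₁ × V₂ → ℝ :=
  Sum.elim (c 0 • z) fun p => c 1 * z p.1

theorem ncoronaLift_smul {V₁ V₂ : Type*} (z : V₁ → ℝ) (x : ℝ) (c : Fin 2 → ℝ) :
    ncoronaLift V₂ z (x • c) = x • ncoronaLift V₂ z c := by
  ext (v | p) <;> simp [ncoronaLift, mul_assoc]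

theorem ncoronaLift_ne_zero {V₁ V₂ : Type*} [Nonempty V₂] {z : V₁ → ℝ} (hz : z ≠ 0)
    {c : Fin 2 → ℝ} (hc : c ≠ 0) : ncoronaLift V₂ z c ≠ 0 := by
  obtain ⟨v, hv⟩ := Function.ne_iff.mp hz
  obtain ⟨u⟩ := ‹Nonempty V₂›
  intro h
  have h0 : c 0 * z v = 0 := congrFun h (.inl v)
  have h1 : c 1 * z v = 0 := congrFun h (.inr (v, u))
  exact hc (funext fun i => by fin_cases i <;> simp_all)

def ncoronaQuotient (n₂ r₁ r₂ : ℕ) (ν : ℝ) : Matrix (Fin 2) (Fin 2) ℝ :=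
  !![n₂ * r₁ + ν, n₂ * (ν - r₁); ν - r₁, r₁ + 2 * r₂]

theorem eval_charpoly_ncoronaQuotient (n₂ r₁ r₂ : ℕ) (ν x : ℝ) :
    (ncoronaQuotient n₂ r₁ r₂ ν).charpoly.eval x = x ^ 2 - (((n₂ : ℝ) + 1) * r₁ + 2 * r₂ + ν) * x
        + (2 * n₂ * r₁ * r₂ + (2 * (n₂ : ℝ) * r₁ + 2 * r₂ + r₁) * ν - n₂ * ν ^ 2) := by
  rw [charpoly_fin_two, trace_fin_two, det_fin_two]
  simp only [ncoronaQuotient, of_apply, cons_val', cons_val_zero, cons_val_fin_one, cons_val_one,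
    map_add, map_mul, map_natCast, map_sub, eval_add, eval_sub, eval_pow, eval_X, eval_mul,
    eval_natCast, eval_C]
  ring

theorem signlessLap_ncorona_mulVec_ncoronaLift {V₁ V₂ : Type*} [Fintype V₁] [Fintype V₂]
    [DecidableEq V₁] [DecidableEq V₂] {G₁ : SimpleGraph V₁} {G₂ : SimpleGraph V₂}
    [DecidableRel G₁.Adj] [DecidableRel G₂.Adj] {r₁ r₂ : ℕ} (hreg₁ : G₁.IsRegularOfDegree r₁)
    (hreg₂ : G₂.IsRegularOfDegree r₂) {z : V₁ → ℝ} {ν : ℝ} (hz : signlessLap G₁ *ᵥ z = ν • z)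
    (c : Fin 2 → ℝ) :
    signlessLap (ncorona G₁ G₂) *ᵥ ncoronaLift V₂ z c =
      ncoronaLift V₂ z (ncoronaQuotient (Fintype.card V₂) r₁ r₂ ν *ᵥ c) := by
  have hA := hreg₁.adjMatrix_mulVec_eq_of_signlessLap hz
  ext (v | ⟨i, u⟩)
  · have hfibres : (fun i => c 0 * z i + Fintype.card V₂ * (c 1 * z i)) =
        (c 0 + Fintype.card V₂ * c 1) • z := by
      ext
      simp only [Pi.smul_apply, smul_eq_mul]
      ring
    rw [signlessLap_mulVec_apply, ncoronaLift, ncorona_adjMatrix_mulVec_inl]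
    simp only [Pi.smul_apply, smul_eq_mul, Finset.sum_const, Finset.card_univ, nsmul_eq_mul]
    rw [hfibres, mulVec_smul, hA, ncorona_degree_inl, hreg₁ v]
    simp only [ncoronaLift, Sum.elim_inl, Pi.smul_apply, smul_eq_mul, mulVec, dotProduct,
      ncoronaQuotient, of_apply, cons_val', cons_val_fin_one, cons_val_zero, cons_val_one,
      Fin.sum_univ_two]
    push_cast
    ring
  · have hconst : (G₂.adjMatrix ℝ *ᵥ fun _ => c 1 * z i) u = r₂ * (c 1 * z i) :=
      adjMatrix_mulVec_const_apply_of_regular hreg₂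
    rw [signlessLap_mulVec_apply, ncoronaLift, ncorona_adjMatrix_mulVec_inr, mulVec_smul, hA,
      hconst, ncorona_degree_inr, hreg₁ i, hreg₂ u]
    simp only [ncoronaLift, Sum.elim_inr, Pi.smul_apply, smul_eq_mul, mulVec, dotProduct,
      ncoronaQuotient, of_apply, cons_val', cons_val_fin_one, cons_val_zero, cons_val_one,
      Fin.sum_univ_two]
    push_cast
    ring

theorem ncorona_signlessLap_eigenvalues_general {V₁ V₂ : Type*} [Fintype V₁] [Fintype V₂]
    [DecidableEq V₁] [DecidableEq V₂]
    (G₁ : SimpleGraph V₁) (G₂ : SimpleGraph V₂)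
    [DecidableRel G₁.Adj] [DecidableRel G₂.Adj]
    (n₂ r₁ r₂ : ℕ) (h₂ : Fintype.card V₂ = n₂)
    (hn₂ : 2 ≤ n₂)
    (hreg₁ : G₁.IsRegularOfDegree r₁) (hreg₂ : G₂.IsRegularOfDegree r₂)
    (ν : ℝ) (hν : ((signlessLap G₁).charpoly).IsRoot ν) :
    ∀ x : ℝ, x ^ 2 - (((n₂ : ℝ) + 1) * r₁ + 2 * r₂ + ν) * x
        + (2 * n₂ * r₁ * r₂ + (2 * (n₂ : ℝ) * r₁ + 2 * r₂ + r₁) * ν - n₂ * ν ^ 2) = 0 →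
      ((signlessLap (ncorona G₁ G₂)).charpoly).IsRoot x := by
  intro x hx
  subst h₂
  have : Nonempty V₂ := Fintype.card_pos_iff.mp (by omega)
  obtain ⟨z, hz0, hz⟩ := (isRoot_charpoly_iff_exists_mulVec_eq_smul _ ν).mp hν
  obtain ⟨c, hc0, hc⟩ := (isRoot_charpoly_iff_exists_mulVec_eq_smul
    (ncoronaQuotient (Fintype.card V₂) r₁ r₂ ν) x).mp
      (by rwa [IsRoot, eval_charpoly_ncoronaQuotient])
  refine (isRoot_charpoly_iff_exists_mulVec_eq_smul _ x).mpr
    ⟨ncoronaLift V₂ z c, ncoronaLift_ne_zero hz0 hc0, ?_⟩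
  rw [signlessLap_ncorona_mulVec_ncoronaLift hreg₁ hreg₂ hz, hc, ncoronaLift_smul]

/-- Corollary 2.6(b): for `G₁` `r₁`-regular on `n₁ ≥ 2` vertices and `G₂` `r₂`-regular on
`n₂ ≥ 2` vertices, for each signless Laplacian eigenvalue `ν` of `G₁`, the two roots of
`x² - ((n₂+1)r₁ + 2r₂ + ν)x + (2n₂r₁r₂ + (2n₂r₁ + 2r₂ + r₁)ν - n₂ν²) = 0`
are signless Laplacian eigenvalues of `G₁ ⋆ G₂`. -/
theorem ncorona_signlessLap_eigenvalues {V₁ V₂ : Type*} [Fintype V₁] [Fintype V₂]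
    [DecidableEq V₁] [DecidableEq V₂]
    (G₁ : SimpleGraph V₁) (G₂ : SimpleGraph V₂)
    [DecidableRel G₁.Adj] [DecidableRel G₂.Adj]
    (n₁ n₂ r₁ r₂ : ℕ) (h₁ : Fintype.card V₁ = n₁) (h₂ : Fintype.card V₂ = n₂)
    (hn₁ : 2 ≤ n₁) (hn₂ : 2 ≤ n₂)
    (hreg₁ : G₁.IsRegularOfDegree r₁) (hreg₂ : G₂.IsRegularOfDegree r₂)
    (ν : ℝ) (hν : ((signlessLap G₁).charpoly).IsRoot ν) :
    ∀ x : ℝ, x ^ 2 - (((n₂ : ℝ) + 1) * r₁ + 2 * r₂ + ν) * x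
        + (2 * n₂ * r₁ * r₂ + (2 * (n₂ : ℝ) * r₁ + 2 * r₂ + r₁) * ν - n₂ * ν ^ 2) = 0 →
      ((signlessLap (ncorona G₁ G₂)).charpoly).IsRoot x :=
  ncorona_signlessLap_eigenvalues_general G₁ G₂ n₂ r₁ r₂ h₂ hn₂ hreg₁ hreg₂ ν hν
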